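/- Let a, b ∈ ℝ^d be two independent random vectors with i.i.d. coordinates each distributed as a product of an independent Bernoulli(s/d) and a N(0, 1/s) Gaussian. Let C² = 2c³/√(c² - 1) for some c > 1. Then for all t with 0 ≤ t ≤ C²s/d, P[|⟨a, b⟩| ≥ t] ≤ 2·exp(-dt²/(2C²)), and for t > C²s/d, P[|⟨a, b⟩| ≥ t] ≤ 2·exp(-st/2). -/

import Mathlib

/-!
Write `p = s/d`. Integrating out `b_ℓ` in `E exp(θ a_ℓ b_ℓ)` leaves `1 - p + p exp(θ² a_ℓ² / 2s)`,
and integrating out `a_ℓ` is then a Gaussian integral of `exp(κ y²)`, so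
`E exp(θ a_ℓ b_ℓ) = 1 - p² + p² (1 - θ²/s²)^(-1/2)`. For `|θ| ≤ 4s/5` this is at most
`exp(5θ²/(3d²))`, hence by independence `⟨a, b⟩` has moment generating function at most
`exp(5θ²/(3d))` on that range: it is sub-exponential. The two-sided Chernoff bound with
`θ = 4td/(5C²)` for small `t`, and `θ = 4s/5` for large `t`, gives both tails; both choices
work because `C² ≥ 4`, which holds for every `c > 1`.
-/

open MeasureTheory ProbabilityTheory

/-- The common coordinate distribution: `0` with probability `1 - s/d`, otherwise
`N(0, 1/s)`. -/
noncomputable def sparseGaussianMix (s d : ℕ) : Measure ℝ :=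
  ENNReal.ofReal (1 - (s : ℝ) / d) • Measure.dirac (0 : ℝ) +
    ENNReal.ofReal ((s : ℝ) / d) • gaussianReal 0 (Real.toNNReal (1 / s))

open Real
open scoped NNReal ENNReal

lemma lintegral_exp_mul_gaussianReal (v : ℝ≥0) (c : ℝ) :
    ∫⁻ y, ENNReal.ofReal (exp (c * y)) ∂gaussianReal 0 v =
      ENNReal.ofReal (exp (v * c ^ 2 / 2)) := by
  rw [← ofReal_integral_eq_lintegral_ofReal (integrable_exp_mul_gaussianReal c)
    (ae_of_all _ fun _ ↦ (exp_pos _).le)]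
  simpa [mgf] using congrArg ENNReal.ofReal (congrFun (mgf_fun_id_gaussianReal (μ := 0) (v := v)) c)

lemma lintegral_exp_mul_sq_gaussianReal {v : ℝ≥0} (hv : v ≠ 0) {θ : ℝ} (hθ : 2 * θ * v < 1) :
    ∫⁻ y, ENNReal.ofReal (exp (θ * y ^ 2)) ∂gaussianReal 0 v =
      ENNReal.ofReal (√(1 - 2 * θ * v))⁻¹ := by
  have hv0 : (0 : ℝ) < v := by positivity
  set b := (1 - 2 * θ * v) / (2 * v) with hb_def
  have hb : 0 < b := by positivity
  have hdensity (y : ℝ) : gaussianPDFReal 0 v y * exp (θ * y ^ 2) =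
      (√(2 * π * v))⁻¹ * exp (-b * y ^ 2) := by
    rw [gaussianPDFReal, mul_assoc, ← exp_add]
    congr 2
    rw [hb_def]
    field_simp
    ring
  rw [gaussianReal_of_var_ne_zero _ hv, lintegral_withDensity_eq_lintegral_mul _
    (measurable_gaussianPDF _ _) (by fun_prop)]
  simp only [Pi.mul_apply, gaussianPDF, ← ENNReal.ofReal_mul (gaussianPDFReal_nonneg _ _ _),
    hdensity]
  rw [← ofReal_integral_eq_lintegral_ofReal ((integrable_exp_neg_mul_sq hb).const_mul _)
    (ae_of_all _ fun _ ↦ by positivity), integral_const_mul, integral_gaussian,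
    hb_def, div_div_eq_mul_div, sqrt_div' _ (by linarith), ← mul_assoc, mul_comm π 2]
  congr 1
  field_simp

lemma one_le_inv_sqrt_one_sub {u : ℝ} (hu0 : 0 ≤ u) (hu1 : u < 1) : 1 ≤ (√(1 - u))⁻¹ :=
  one_le_inv₀ (by simpa using hu1) |>.2 (sqrt_le_one.2 (by linarith))

lemma inv_sqrt_one_sub_le {u : ℝ} (hu0 : 0 ≤ u) (hu : u ≤ 16 / 25) :
    (√(1 - u))⁻¹ ≤ 1 + 5 / 3 * u := by
  rw [inv_le_comm₀ (by simp; linarith) (by positivity), le_sqrt (by positivity) (by linarith),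
    inv_pow, inv_le_iff_one_le_mul₀ (by positivity)]
  nlinarith [mul_nonneg hu0 hu0, mul_nonneg (mul_nonneg hu0 hu0) hu0]

lemma four_le_two_mul_pow_three_div_sqrt {c : ℝ} (hc : 1 < c) :
    4 ≤ 2 * c ^ 3 / √(c ^ 2 - 1) := by
  have hx : 0 < c ^ 2 - 1 := by nlinarith
  rw [le_div_iff₀ (sqrt_pos.2 hx), ← le_div_iff₀' (by norm_num), sqrt_le_iff]
  refine ⟨by positivity, ?_⟩
  -- with `x = c²`: `x³ - 4x + 4 = x (x - 2)² + 4 (x - 1)²`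
  nlinarith [mul_nonneg (sq_nonneg c) (sq_nonneg (c ^ 2 - 2)), sq_nonneg (c ^ 2 - 1)]

lemma isProbabilityMeasure_sparseGaussianMix {s d : ℕ} (hsd : s ≤ d) :
    IsProbabilityMeasure (sparseGaussianMix s d) := by
  have hp : (s : ℝ) / d ≤ 1 := div_le_one_of_le₀ (by exact_mod_cast hsd) (Nat.cast_nonneg d)
  constructor
  simp only [sparseGaussianMix, Measure.add_apply, Measure.smul_apply, measure_univ, smul_eq_mul,
    mul_one]
  rw [← ENNReal.ofReal_add (by linarith) (by positivity)]
  simp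

lemma lintegral_sparseGaussianMix (s d : ℕ) (f : ℝ → ℝ≥0∞) :
    ∫⁻ x, f x ∂sparseGaussianMix s d = ENNReal.ofReal (1 - (s : ℝ) / d) * f 0 +
      ENNReal.ofReal ((s : ℝ) / d) * ∫⁻ x, f x ∂gaussianReal 0 (Real.toNNReal (1 / s)) := by
  simp only [sparseGaussianMix, lintegral_add_measure, lintegral_smul_measure, lintegral_dirac,
    smul_eq_mul]

lemma lintegral_exp_mul_mul_sparseGaussianMix_prod {s d : ℕ} (hsd : s ≤ d) {θ : ℝ}
    (hθ : θ ^ 2 < (s : ℝ) ^ 2) :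
    ∫⁻ z : ℝ × ℝ, ENNReal.ofReal (exp (θ * (z.1 * z.2)))
        ∂(sparseGaussianMix s d).prod (sparseGaussianMix s d) =
      ENNReal.ofReal (1 - ((s : ℝ) / d) ^ 2 + ((s : ℝ) / d) ^ 2 * (√(1 - θ ^ 2 / s ^ 2))⁻¹) := by
  have := isProbabilityMeasure_sparseGaussianMix hsd
  have hs : (0 : ℝ) < s :=
    lt_of_pow_lt_pow_left₀ 2 (Nat.cast_nonneg s) (by simpa using (sq_nonneg θ).trans_lt hθ)
  set p := (s : ℝ) / d
  have hp0 : 0 ≤ p := by positivity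
  have hp1 : p ≤ 1 := div_le_one_of_le₀ (by exact_mod_cast hsd) (Nat.cast_nonneg d)
  set v := Real.toNNReal (1 / s)
  have hv : (v : ℝ) = 1 / s := Real.coe_toNNReal _ (by positivity)
  have hv0 : v ≠ 0 := by
    rw [← NNReal.coe_ne_zero, hv]; positivity
  have hinner (x : ℝ) : ∫⁻ y, ENNReal.ofReal (exp (θ * (x * y))) ∂sparseGaussianMix s d =
      ENNReal.ofReal (1 - p) + ENNReal.ofReal p * ENNReal.ofReal (exp (θ ^ 2 * v / 2 * x ^ 2)) := by
    simp_rw [← mul_assoc θ x]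
    rw [lintegral_sparseGaussianMix, lintegral_exp_mul_gaussianReal]
    simp only [mul_zero, exp_zero, ENNReal.ofReal_one, mul_one]
    congr 4
    ring
  have hθv : 2 * (θ ^ 2 * v / 2) * v = θ ^ 2 / s ^ 2 := by
    rw [hv]; field_simp
  rw [lintegral_prod _ (by fun_prop)]
  simp only [hinner]
  rw [lintegral_add_left measurable_const, lintegral_const, measure_univ, mul_one,
    lintegral_const_mul _ (by fun_prop), lintegral_sparseGaussianMix,
    lintegral_exp_mul_sq_gaussianReal hv0 (by rw [hθv, div_lt_one (by positivity)]; exact hθ),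
    hθv]
  simp only [ne_eq, OfNat.ofNat_ne_zero, not_false_eq_true, zero_pow, mul_zero, exp_zero,
    ENNReal.ofReal_one, mul_one]
  rw [← ENNReal.ofReal_mul hp0, ← ENNReal.ofReal_add (by linarith) (by positivity),
    ← ENNReal.ofReal_mul hp0, ← ENNReal.ofReal_add (by linarith) (by positivity)]
  congr 1
  ring

section

variable {Ω : Type*} [MeasurableSpace Ω] {μ : Measure Ω}

namespace ProbabilityTheory

lemma iIndepFun.indepFun_finsetSum_mul_of_notMem {ι : Type*} {f g : ι → Ω → ℝ}
    (h : iIndepFun (Sum.elim f g) μ) (hf : ∀ i, AEMeasurable (f i) μ)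
    (hg : ∀ i, AEMeasurable (g i) μ) {T : Finset ι} {k : ι} (hk : k ∉ T) :
    IndepFun (∑ i ∈ T, f i * g i) (f k * g k) μ := by
  have hdisj : Disjoint (T.disjSum T) (({k} : Finset ι).disjSum {k}) := by
    rw [Finset.disjoint_left]
    rintro (i | i) <;> simp only [Finset.inl_mem_disjSum, Finset.inr_mem_disjSum,
      Finset.mem_singleton] <;> rintro hi rfl <;> exact hk hi
  have hblocks := h.indepFun_finset₀ _ _ hdisj (Sum.rec hf hg)
  have hφ : Measurable fun x : T.disjSum T → ℝ ↦
      ∑ i ∈ T.attach, x ⟨.inl i, Finset.inl_mem_disjSum.2 i.2⟩ *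
        x ⟨.inr i, Finset.inr_mem_disjSum.2 i.2⟩ := by fun_prop
  have hψ : Measurable fun x : ({k} : Finset ι).disjSum {k} → ℝ ↦
      x ⟨.inl k, by simp⟩ * x ⟨.inr k, by simp⟩ := by fun_prop
  convert hblocks.comp hφ hψ using 1 <;> ext ω
  · simp only [Finset.sum_apply, Pi.mul_apply, Function.comp_apply, Sum.elim_inl, Sum.elim_inr]
    exact (Finset.sum_attach T fun i ↦ f i ω * g i ω).symm
  · rfl

lemma iIndepFun.mgf_finsetSum_mul {ι : Type*} {f g : ι → Ω → ℝ}
    (h : iIndepFun (Sum.elim f g) μ) (hf : ∀ i, AEMeasurable (f i) μ)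
    (hg : ∀ i, AEMeasurable (g i) μ) (T : Finset ι) (θ : ℝ) :
    mgf (∑ i ∈ T, f i * g i) μ θ = ∏ i ∈ T, mgf (f i * g i) μ θ := by
  classical
  have := h.isProbabilityMeasure
  induction T using Finset.induction_on with
  | empty => simp
  | insert k T hk ih =>
    rw [Finset.sum_insert hk, Finset.prod_insert hk, ← ih,
      (h.indepFun_finsetSum_mul_of_notMem hf hg hk).symm.mgf_add' (by fun_prop)
        (Finset.aemeasurable_sum _ fun i _ ↦ (hf i).mul (hg i)).aestronglyMeasurable]

end ProbabilityTheory

lemma measureReal_abs_ge_le_of_mgf_le [IsFiniteMeasure μ] {X : Ω → ℝ} {θ K : ℝ} (hθ : 0 ≤ θ)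
    (t : ℝ) (hint : Integrable (fun ω ↦ exp (θ * X ω)) μ)
    (hint' : Integrable (fun ω ↦ exp (-θ * X ω)) μ)
    (hmgf : mgf X μ θ ≤ exp K) (hmgf' : mgf X μ (-θ) ≤ exp K) :
    μ.real {ω | t ≤ |X ω|} ≤ 2 * exp (-θ * t + K) := by
  calc μ.real {ω | t ≤ |X ω|} ≤ μ.real ({ω | t ≤ X ω} ∪ {ω | X ω ≤ -t}) :=
        measureReal_mono fun ω (hω : t ≤ |X ω|) ↦
          show t ≤ X ω ∨ X ω ≤ -t from (le_abs'.1 hω).symm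
    _ ≤ μ.real {ω | t ≤ X ω} + μ.real {ω | X ω ≤ -t} := measureReal_union_le _ _
    _ ≤ exp (-θ * t) * mgf X μ θ + exp (-(-θ) * -t) * mgf X μ (-θ) :=
        add_le_add (measure_ge_le_exp_mul_mgf t hθ hint)
          (measure_le_le_exp_mul_mgf (-t) (by linarith) hint')
    _ ≤ exp (-θ * t) * exp K + exp (-θ * t) * exp K := by
        rw [neg_mul_neg]
        gcongr
    _ = 2 * exp (-θ * t + K) := by rw [exp_add]; ring

section SparseGaussianMix

variable [IsProbabilityMeasure μ] {s d : ℕ} {A B : Ω → ℝ} {θ : ℝ}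

lemma mgf_mul_of_indepFun_sparseGaussianMix (hsd : s ≤ d)
    (hA : μ.map A = sparseGaussianMix s d) (hB : μ.map B = sparseGaussianMix s d)
    (hAB : IndepFun A B μ) (hθ : θ ^ 2 < (s : ℝ) ^ 2) :
    mgf (A * B) μ θ = 1 - ((s : ℝ) / d) ^ 2 + ((s : ℝ) / d) ^ 2 * (√(1 - θ ^ 2 / s ^ 2))⁻¹ := by
  have := isProbabilityMeasure_sparseGaussianMix hsd
  have hAm : AEMeasurable A μ := .of_map_ne_zero (hA ▸ IsProbabilityMeasure.ne_zero _)
  have hBm : AEMeasurable B μ := .of_map_ne_zero (hB ▸ IsProbabilityMeasure.ne_zero _)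
  have hlaw : μ.map (fun ω ↦ (A ω, B ω)) =
      (sparseGaussianMix s d).prod (sparseGaussianMix s d) := by
    rw [(indepFun_iff_map_prod_eq_prod_map_map hAm hBm).1 hAB, hA, hB]
  have hw := one_le_inv_sqrt_one_sub (u := θ ^ 2 / s ^ 2) (by positivity)
    (div_lt_one ((sq_nonneg θ).trans_lt hθ) |>.2 hθ)
  calc mgf (A * B) μ θ
      = mgf (fun z : ℝ × ℝ ↦ z.1 * z.2)
          ((sparseGaussianMix s d).prod (sparseGaussianMix s d)) θ := by
        rw [← hlaw, mgf_map (hAm.prodMk hBm) (by fun_prop)]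
        rfl
    _ = _ := by
        rw [mgf, integral_eq_lintegral_of_nonneg_ae (ae_of_all _ fun _ ↦ (exp_pos _).le)
          (by fun_prop), lintegral_exp_mul_mul_sparseGaussianMix_prod hsd hθ,
          ENNReal.toReal_ofReal (by nlinarith [sq_nonneg ((s : ℝ) / d)])]

lemma one_le_mgf_mul_of_indepFun_sparseGaussianMix (hsd : s ≤ d)
    (hA : μ.map A = sparseGaussianMix s d) (hB : μ.map B = sparseGaussianMix s d)
    (hAB : IndepFun A B μ) (hθ : θ ^ 2 < (s : ℝ) ^ 2) :
    1 ≤ mgf (A * B) μ θ := by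
  have := one_le_inv_sqrt_one_sub (by positivity) (div_lt_one ((sq_nonneg θ).trans_lt hθ) |>.2 hθ)
  rw [mgf_mul_of_indepFun_sparseGaussianMix hsd hA hB hAB hθ]
  nlinarith [sq_nonneg ((s : ℝ) / d)]

lemma mgf_mul_le_of_indepFun_sparseGaussianMix (hs : 0 < s) (hsd : s ≤ d)
    (hA : μ.map A = sparseGaussianMix s d) (hB : μ.map B = sparseGaussianMix s d)
    (hAB : IndepFun A B μ) (hθ : θ ^ 2 ≤ 16 / 25 * (s : ℝ) ^ 2) :
    mgf (A * B) μ θ ≤ exp (5 * θ ^ 2 / (3 * d ^ 2)) := by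
  have hs : (0 : ℝ) < s := by exact_mod_cast hs
  have hd : (0 : ℝ) < d := hs.trans_le (by exact_mod_cast hsd)
  have hu : θ ^ 2 / s ^ 2 ≤ 16 / 25 := by rw [div_le_iff₀ (by positivity)]; exact hθ
  have := inv_sqrt_one_sub_le (by positivity) hu
  rw [mgf_mul_of_indepFun_sparseGaussianMix hsd hA hB hAB (by nlinarith)]
  calc 1 - ((s : ℝ) / d) ^ 2 + ((s : ℝ) / d) ^ 2 * (√(1 - θ ^ 2 / s ^ 2))⁻¹
      ≤ 1 - ((s : ℝ) / d) ^ 2 + ((s : ℝ) / d) ^ 2 * (1 + 5 / 3 * (θ ^ 2 / s ^ 2)) := by gcongr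
    _ = 5 * θ ^ 2 / (3 * d ^ 2) + 1 := by field_simp; ring
    _ ≤ exp (5 * θ ^ 2 / (3 * d ^ 2)) := add_one_le_exp _

lemma measureReal_abs_sum_mul_ge_le (hs : 0 < s) (hsd : s ≤ d) {f g : Fin d → Ω → ℝ}
    (hf : ∀ ℓ, μ.map (f ℓ) = sparseGaussianMix s d)
    (hg : ∀ ℓ, μ.map (g ℓ) = sparseGaussianMix s d) (hindep : iIndepFun (Sum.elim f g) μ)
    (hθ0 : 0 ≤ θ) (hθ : θ ≤ 4 / 5 * s) (t : ℝ) :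
    μ.real {ω | t ≤ |(∑ ℓ, f ℓ * g ℓ) ω|} ≤ 2 * exp (-θ * t + 5 * θ ^ 2 / (3 * d)) := by
  have := isProbabilityMeasure_sparseGaussianMix hsd
  have hfm ℓ : AEMeasurable (f ℓ) μ := .of_map_ne_zero (hf ℓ ▸ IsProbabilityMeasure.ne_zero _)
  have hgm ℓ : AEMeasurable (g ℓ) μ := .of_map_ne_zero (hg ℓ ▸ IsProbabilityMeasure.ne_zero _)
  have hpair ℓ : IndepFun (f ℓ) (g ℓ) μ := hindep.indepFun (i := .inl ℓ) (j := .inr ℓ) (by simp)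
  have hd : (d : ℝ) ≠ 0 := Nat.cast_ne_zero.2 (hs.trans_le hsd).ne'
  have hbound (σ : ℝ) (hσ : σ ^ 2 = θ ^ 2) :
      Integrable (fun ω ↦ exp (σ * (∑ ℓ, f ℓ * g ℓ) ω)) μ ∧
        mgf (∑ ℓ, f ℓ * g ℓ) μ σ ≤ exp (5 * θ ^ 2 / (3 * d)) := by
    have hσ2 : σ ^ 2 ≤ 16 / 25 * (s : ℝ) ^ 2 := by nlinarith
    have hσ2' : σ ^ 2 < (s : ℝ) ^ 2 := by
      have : (0 : ℝ) < s := by exact_mod_cast hs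
      nlinarith
    have hmgf := hindep.mgf_finsetSum_mul hfm hgm Finset.univ σ
    refine ⟨mgf_pos_iff.1 ?_, ?_⟩
    · rw [hmgf]
      exact Finset.prod_pos fun ℓ _ ↦ one_pos.trans_le
        (one_le_mgf_mul_of_indepFun_sparseGaussianMix hsd (hf ℓ) (hg ℓ) (hpair ℓ) hσ2')
    · calc mgf (∑ ℓ, f ℓ * g ℓ) μ σ ≤ ∏ _ℓ : Fin d, exp (5 * σ ^ 2 / (3 * d ^ 2)) := by
            rw [hmgf]
            exact Finset.prod_le_prod (fun _ _ ↦ mgf_nonneg) fun ℓ _ ↦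
              mgf_mul_le_of_indepFun_sparseGaussianMix hs hsd (hf ℓ) (hg ℓ) (hpair ℓ) hσ2
        _ = exp (5 * θ ^ 2 / (3 * d)) := by
            rw [Finset.prod_const, Finset.card_univ, Fintype.card_fin, ← exp_nat_mul, hσ]
            field_simp
  obtain ⟨hint, hmgf⟩ := hbound θ rfl
  obtain ⟨hint', hmgf'⟩ := hbound (-θ) (neg_sq θ)
  exact measureReal_abs_ge_le_of_mgf_le hθ0 t hint hint' hmgf hmgf'

end SparseGaussianMix

end

theorem stmt6_general {Ω : Type*} [MeasurableSpace Ω] (μ : Measure Ω) [IsProbabilityMeasure μ]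
    (s d : ℕ) (hs : 1 ≤ s) (hsd : s ≤ d)
    (a b : Ω → Fin d → ℝ)
    (ha : ∀ ℓ, Measure.map (fun ω => a ω ℓ) μ = sparseGaussianMix s d)
    (hb : ∀ ℓ, Measure.map (fun ω => b ω ℓ) μ = sparseGaussianMix s d)
    (hindep : iIndepFun
      (Sum.elim (fun (ℓ : Fin d) ω => a ω ℓ) (fun (ℓ : Fin d) ω => b ω ℓ)) μ)
    (c C t : ℝ) (hc : 1 < c)
    (hC2 : C ^ 2 = 2 * c ^ 3 / Real.sqrt (c ^ 2 - 1)) (ht : 0 ≤ t) :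
    (t ≤ C ^ 2 * s / d →
      (μ {ω | t ≤ |∑ ℓ, a ω ℓ * b ω ℓ|}).toReal ≤
        2 * Real.exp (-(d : ℝ) * t ^ 2 / (2 * C ^ 2))) ∧
    (C ^ 2 * s / d < t →
      (μ {ω | t ≤ |∑ ℓ, a ω ℓ * b ω ℓ|}).toReal ≤
        2 * Real.exp (-(s : ℝ) * t / 2)) := by
  have hd : (0 : ℝ) < d := by exact_mod_cast hs.trans hsd
  have hC : 4 ≤ C ^ 2 := hC2 ▸ four_le_two_mul_pow_three_div_sqrt hc
  have hC0 : C ≠ 0 := by rintro rfl; norm_num at hC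
  have htail (θ : ℝ) (hθ0 : 0 ≤ θ) (hθ : θ ≤ 4 / 5 * s) :
      (μ {ω | t ≤ |∑ ℓ, a ω ℓ * b ω ℓ|}).toReal ≤ 2 * exp (-θ * t + 5 * θ ^ 2 / (3 * d)) := by
    simpa [Finset.sum_apply, measureReal_def] using
      measureReal_abs_sum_mul_ge_le hs hsd ha hb hindep hθ0 hθ t
  refine ⟨fun hsmall ↦ (htail (4 * t * d / (5 * C ^ 2)) (by positivity) ?_).trans ?_,
    fun hlarge ↦ (htail (4 / 5 * s) (by positivity) le_rfl).trans ?_⟩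
  · rw [div_le_iff₀ (by positivity)]
    rw [le_div_iff₀ hd] at hsmall
    nlinarith
  · gcongr 2 * exp ?_
    have h16 : 16 / (15 * C ^ 2) ≤ 4 / 15 := by rw [div_le_iff₀ (by positivity)]; nlinarith
    calc _ = d * t ^ 2 / C ^ 2 * (-4 / 5 + 16 / (15 * C ^ 2)) := by field_simp; ring
      _ ≤ d * t ^ 2 / C ^ 2 * (-1 / 2) := by gcongr; linarith
      _ = _ := by ring
  · gcongr 2 * exp ?_
    rw [div_lt_iff₀ hd] at hlarge
    field_simp
    nlinarith [mul_le_mul_of_nonneg_left hC (Nat.cast_nonneg s : (0 : ℝ) ≤ s)]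

theorem stmt6 {Ω : Type*} [MeasurableSpace Ω] (μ : Measure Ω) [IsProbabilityMeasure μ]
    (s d : ℕ) (hs : 1 ≤ s) (hsd : s ≤ d)
    (a b : Ω → Fin d → ℝ)
    (ha : ∀ ℓ, Measure.map (fun ω => a ω ℓ) μ = sparseGaussianMix s d)
    (hb : ∀ ℓ, Measure.map (fun ω => b ω ℓ) μ = sparseGaussianMix s d)
    (hindep : iIndepFun
      (Sum.elim (fun (ℓ : Fin d) ω => a ω ℓ) (fun (ℓ : Fin d) ω => b ω ℓ)) μ)
    (c C t : ℝ) (hc : 1 < c) (hC : 0 < C)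
    (hC2 : C ^ 2 = 2 * c ^ 3 / Real.sqrt (c ^ 2 - 1)) (ht : 0 ≤ t) :
    (t ≤ C ^ 2 * s / d →
      (μ {ω | t ≤ |∑ ℓ, a ω ℓ * b ω ℓ|}).toReal ≤
        2 * Real.exp (-(d : ℝ) * t ^ 2 / (2 * C ^ 2))) ∧
    (C ^ 2 * s / d < t →
      (μ {ω | t ≤ |∑ ℓ, a ω ℓ * b ω ℓ|}).toReal ≤
        2 * Real.exp (-(s : ℝ) * t / 2)) :=
  stmt6_general μ s d hs hsd a b ha hb hindep c C t hc hC2 ht
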